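/- arXiv:1705.05626 — 2 statements merged into one kernel-verified Lean document; each statement's English description precedes it below -/
import Mathlib

section
/- Let (t_n) be a sequence of positive reals whose counting function satisfies N(t+1) − N(t) ≤ C t² for all t ≥ 1 (and N(1) ≤ C). Then for Y ≥ 1, ∫_0^∞ ( ∑_{n : t < t_n < t+1, t_n > Y} (1 + t_n²)^{-3/2} )² dt ≤ C'/Y for a constant C' depending only on C. -/
/-!
Every window `(u, u + 1)` contains at most `2 C max(u, 1)²` of the `t n` (by the short-interval
bound, or by `N(2) ≤ 2 C` when `u < 1`), and each term with `t n > max(u, Y)` is at most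
`max(u, Y)⁻³`. So the inner sum is at most `2 C / max(u, Y)`, whose square integrates over
`(0, ∞)` to `8 C² / Y`.
-/

open MeasureTheory Finset

lemma tsum_ite_le_card_filter_mul {P : ℕ → Prop} [DecidablePred P] {g : ℕ → ℝ} {s : Finset ℕ}
    (hs : ∀ n, P n → n ∈ s) {B : ℝ} (hg : ∀ n, P n → g n ≤ B) :
    ∑' n, (if P n then g n else 0) ≤ #(s.filter P) * B := by
  have hsupp : ∀ n ∉ s, (if P n then g n else 0) = 0 := fun n hn =>
    if_neg fun hP => hn (hs n hP)
  rw [tsum_eq_sum hsupp, ← sum_filter, ← nsmul_eq_mul]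
  exact sum_le_card_nsmul _ _ _ fun n hn => hg n (mem_filter.1 hn).2

lemma one_add_sq_rpow_neg_three_halves_le {m x : ℝ} (hm : 0 < m) (hmx : m ≤ x) :
    (1 + x ^ 2) ^ (-(3 : ℝ) / 2) ≤ (m ^ 3)⁻¹ := calc
  (1 + x ^ 2) ^ (-(3 : ℝ) / 2) ≤ (m ^ 2) ^ (-(3 : ℝ) / 2) :=
    Real.rpow_le_rpow_of_nonpos (by positivity) (by nlinarith) (by norm_num)
  _ = (m ^ 3)⁻¹ := by
    rw [← Real.rpow_two, ← Real.rpow_mul hm.le]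
    norm_num

section Counting

variable {t : ℕ → ℝ} (hfin : ∀ T : ℝ, {n | t n ≤ T}.Finite)

lemma card_filter_lt_add_card {a b : ℝ} (hab : a ≤ b) :
    #((hfin b).toFinset.filter (a < t ·)) + #(hfin a).toFinset = #(hfin b).toFinset := by
  suffices h : (hfin b).toFinset.filter (¬ a < t ·) = (hfin a).toFinset by
    rw [← h]
    exact card_filter_add_card_filter_not _
  ext n
  simp only [mem_filter, Set.Finite.mem_toFinset, Set.mem_ofPred_eq, not_lt]
  exact ⟨And.right, fun h => ⟨h.trans hab, h⟩⟩

lemma card_window_le {C : ℝ} (h1 : (#(hfin 1).toFinset : ℝ) ≤ C)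
    (hstep : ∀ u : ℝ, 1 ≤ u → (#(hfin (u + 1)).toFinset : ℝ) ≤ #(hfin u).toFinset + C * u ^ 2)
    (u : ℝ) : (#((hfin (u + 1)).toFinset.filter (u < t ·)) : ℝ) ≤ 2 * C * max u 1 ^ 2 := by
  rcases le_or_gt 1 u with hu | hu
  · have hsplit : (#((hfin (u + 1)).toFinset.filter (u < t ·)) : ℝ) + #(hfin u).toFinset =
        #(hfin (u + 1)).toFinset := by exact_mod_cast card_filter_lt_add_card hfin (by linarith)
    have hC : 0 ≤ C := (Nat.cast_nonneg _).trans h1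
    rw [max_eq_left hu]
    nlinarith [hstep u hu]
  · have hsub : (hfin (u + 1)).toFinset.filter (u < t ·) ⊆ (hfin (1 + 1)).toFinset := by
      intro n hn
      simp only [mem_filter, Set.Finite.mem_toFinset, Set.mem_ofPred_eq] at hn ⊢
      linarith [hn.1]
    have hcard : (#((hfin (u + 1)).toFinset.filter (u < t ·)) : ℝ) ≤ #(hfin (1 + 1)).toFinset := by
      exact_mod_cast card_le_card hsub
    rw [max_eq_right hu.le]
    linarith [hstep 1 le_rfl]

lemma tsum_window_le {C Y : ℝ} (h1 : (#(hfin 1).toFinset : ℝ) ≤ C)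
    (hstep : ∀ u : ℝ, 1 ≤ u → (#(hfin (u + 1)).toFinset : ℝ) ≤ #(hfin u).toFinset + C * u ^ 2)
    (hY : 1 ≤ Y) (u : ℝ) :
    (∑' n : ℕ, if u < t n ∧ t n < u + 1 ∧ Y < t n
      then (1 + (t n) ^ 2) ^ (-(3 : ℝ) / 2) else 0) ≤ 2 * C / max u Y := by
  have hC : 0 ≤ C := (Nat.cast_nonneg _).trans h1
  have hm : 0 < max u Y := one_pos.trans_le (hY.trans (le_max_right u Y))
  calc _ ≤ #((hfin (u + 1)).toFinset.filter fun n => u < t n ∧ t n < u + 1 ∧ Y < t n)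
        * (max u Y ^ 3)⁻¹ :=
      tsum_ite_le_card_filter_mul (fun n hn => (hfin (u + 1)).mem_toFinset.2 hn.2.1.le)
        fun n hn => one_add_sq_rpow_neg_three_halves_le hm (max_le hn.1.le hn.2.2.le)
    _ ≤ #((hfin (u + 1)).toFinset.filter (u < t ·)) * (max u Y ^ 3)⁻¹ := by
      gcongr with n
      exact And.left
    _ ≤ 2 * C * max u 1 ^ 2 * (max u Y ^ 3)⁻¹ := by
      gcongr
      exact card_window_le hfin h1 hstep u
    _ ≤ 2 * C * max u Y ^ 2 * (max u Y ^ 3)⁻¹ := by gcongr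
    _ = 2 * C / max u Y := by field_simp

end Counting

section InvMaxSq

variable {Y : ℝ} (hY : 0 < Y)
include hY

lemma inv_max_sq_eqOn_Ioi : Set.EqOn (fun u : ℝ => (max u Y ^ 2)⁻¹) (· ^ (-2 : ℝ)) (Set.Ioi Y) :=
  fun u hu => by
    dsimp only
    rw [max_eq_left (le_of_lt hu), Real.rpow_neg (hY.trans hu).le, Real.rpow_two]

lemma integrableOn_Ioi_inv_max_sq_of_gt :
    IntegrableOn (fun u : ℝ => (max u Y ^ 2)⁻¹) (Set.Ioi Y) :=
  (integrableOn_Ioi_rpow_of_lt (by norm_num) hY).congr_fun (inv_max_sq_eqOn_Ioi hY).symm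
    measurableSet_Ioi

lemma integrableOn_Ioi_inv_max_sq :
    IntegrableOn (fun u : ℝ => (max u Y ^ 2)⁻¹) (Set.Ioi 0) := by
  rw [← Set.Ioc_union_Ioi_eq_Ioi hY.le]
  refine IntegrableOn.union ?_ (integrableOn_Ioi_inv_max_sq_of_gt hY)
  exact (continuous_id.max continuous_const |>.pow 2 |>.inv₀ fun u =>
    pow_ne_zero 2 (hY.trans_le (le_max_right u Y)).ne').integrableOn_Ioc

lemma integral_Ioi_inv_max_sq : ∫ u in Set.Ioi (0 : ℝ), (max u Y ^ 2)⁻¹ = 2 / Y := by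
  have hIoc : ∫ u in Set.Ioc 0 Y, (max u Y ^ 2)⁻¹ = 1 / Y := by
    rw [setIntegral_congr_fun measurableSet_Ioc (g := fun _ => (Y ^ 2)⁻¹)
      fun u hu => by simp only [max_eq_right hu.2], setIntegral_const,
      Real.volume_real_Ioc_of_le hY.le, sub_zero, smul_eq_mul]
    field_simp
  have hIoi : ∫ u in Set.Ioi Y, (max u Y ^ 2)⁻¹ = 1 / Y := by
    rw [setIntegral_congr_fun measurableSet_Ioi (inv_max_sq_eqOn_Ioi hY),
      integral_Ioi_rpow_of_lt (by norm_num) hY]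
    norm_num [Real.rpow_neg_one]
  rw [← Set.Ioc_union_Ioi_eq_Ioi hY.le, setIntegral_union (Set.Ioc_disjoint_Ioi le_rfl)
    measurableSet_Ioi ((integrableOn_Ioi_inv_max_sq hY).mono_set Set.Ioc_subset_Ioi_self)
    (integrableOn_Ioi_inv_max_sq_of_gt hY), hIoc, hIoi]
  ring

end InvMaxSq

theorem gallagher_integral_tail_bound (C : ℝ) (hC : 0 < C) :
    ∃ C' > 0, ∀ (t : ℕ → ℝ), (∀ n, 0 < t n) →
      ∀ (hfin : ∀ T : ℝ, {n | t n ≤ T}.Finite),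
        ((hfin 1).toFinset.card : ℝ) ≤ C →
        (∀ u : ℝ, 1 ≤ u →
          ((hfin (u + 1)).toFinset.card : ℝ) ≤ ((hfin u).toFinset.card : ℝ) + C * u ^ 2) →
        ∀ Y : ℝ, 1 ≤ Y →
          ∫ u in Set.Ioi (0 : ℝ),
            (∑' n : ℕ, if u < t n ∧ t n < u + 1 ∧ Y < t n
              then (1 + (t n) ^ 2) ^ (-(3 : ℝ) / 2) else 0) ^ 2
            ≤ C' / Y := by
  refine ⟨8 * C ^ 2, by positivity, fun t _ hfin h1 hstep Y hY => ?_⟩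
  have hY0 : 0 < Y := one_pos.trans_le hY
  calc _ ≤ ∫ u in Set.Ioi (0 : ℝ), 4 * C ^ 2 * (max u Y ^ 2)⁻¹ := by
        refine integral_mono_of_nonneg (.of_forall fun u => sq_nonneg _)
          ((integrableOn_Ioi_inv_max_sq hY0).const_mul _) (.of_forall fun u => ?_)
        calc _ ≤ (2 * C / max u Y) ^ 2 := pow_le_pow_left₀ (tsum_nonneg fun n => by positivity)
              (tsum_window_le hfin h1 hstep hY u) 2
          _ = _ := by ring
    _ = 8 * C ^ 2 / Y := by
        rw [integral_const_mul, integral_Ioi_inv_max_sq hY0]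
        ring
end

section
/- If ψ₀ : ℝ → ℝ is nondecreasing and ψ₃(x) = ∫_0^x ∫_0^{t} ∫_0^{v} ψ₀(u) du dv dt is its threefold integral, then for every x and h > 0: h^{-3}·Δ₃⁻ψ₃(x) ≤ ψ₀(x) ≤ h^{-3}·Δ₃⁺ψ₃(x), where Δ₃⁺ψ₃(x) = ψ₃(x+3h) − 3ψ₃(x+2h) + 3ψ₃(x+h) − ψ₃(x) and Δ₃⁻ψ₃(x) = ψ₃(x) − 3ψ₃(x−h) + 3ψ₃(x−2h) − ψ₃(x−3h). -/
/-!
Forward differences commute with integration, so `Δ_h^k ψ_k` is the `k`-fold integral of `ψ₀`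
over a translate `y + [0, h]^k` of the cube. Since `ψ₀` is monotone, such an integral lies
between `h^k ψ₀ y` and `h^k ψ₀ (y + k h)`; the backward bound is the forward one at `y = x - 3h`.
-/

open MeasureTheory intervalIntegral fwdDiff

def IsIndefiniteIntegral (F G : ℝ → ℝ) : Prop :=
  (∀ a b, IntervalIntegrable G volume a b) ∧ ∀ a b, ∫ t in a..b, G t = F b - F a

namespace IsIndefiniteIntegral

variable {F G : ℝ → ℝ}

lemma of_eq_integral_zero (hG : ∀ a b, IntervalIntegrable G volume a b)
    (hF : ∀ x, F x = ∫ t in (0:ℝ)..x, G t) : IsIndefiniteIntegral F G :=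
  ⟨hG, fun a b => by rw [hF a, hF b, integral_interval_sub_left (hG 0 b) (hG 0 a)]⟩

lemma continuous (hF : IsIndefiniteIntegral F G) : Continuous F :=
  ((continuous_primitive hF.1 0).const_add (F 0)).congr fun x => by
    simp only [hF.2]; ring

lemma fwdDiff (hF : IsIndefiniteIntegral F G) (h : ℝ) :
    IsIndefiniteIntegral (Δ_[h] F) (Δ_[h] G) := by
  have hG_shift : ∀ a b, IntervalIntegrable (fun t => G (t + h)) volume a b := fun a b => by
    simpa using (hF.1 (a + h) (b + h)).comp_add_right h
  refine ⟨fun a b => (hG_shift a b).sub (hF.1 a b), fun a b => ?_⟩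
  simp only [_root_.fwdDiff]
  rw [integral_sub (hG_shift a b) (hF.1 a b), integral_comp_add_right, hF.2, hF.2]
  ring

lemma fwdDiff_iterate (hF : IsIndefiniteIntegral F G) (h : ℝ) (n : ℕ) :
    IsIndefiniteIntegral ((Δ_[h])^[n] F) ((Δ_[h])^[n] G) := by
  induction n with
  | zero => exact hF
  | succ n ih =>
    rw [Function.iterate_succ_apply', Function.iterate_succ_apply']
    exact ih.fwdDiff h

lemma fwdDiff_mem_Icc (hF : IsIndefiniteIntegral F G) {h y m M : ℝ} (hh : 0 ≤ h)
    (hG : ∀ t ∈ Set.Icc y (y + h), G t ∈ Set.Icc m M) :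
    Δ_[h] F y ∈ Set.Icc (h * m) (h * M) := by
  have hy : y ≤ y + h := by linarith
  constructor
  · calc h * m = ∫ _ in y..y + h, m := by simp
      _ ≤ ∫ t in y..y + h, G t :=
        integral_mono_on hy intervalIntegrable_const (hF.1 _ _) fun t ht => (hG t ht).1
      _ = Δ_[h] F y := hF.2 _ _
  · calc Δ_[h] F y = ∫ t in y..y + h, G t := (hF.2 _ _).symm
      _ ≤ ∫ _ in y..y + h, M :=
        integral_mono_on hy (hF.1 _ _) intervalIntegrable_const fun t ht => (hG t ht).2
      _ = h * M := by simp

end IsIndefiniteIntegral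

def FwdDiffSandwich (f : ℝ → ℝ) (h : ℝ) (n : ℕ) (F : ℝ → ℝ) : Prop :=
  ∀ y, (Δ_[h])^[n] F y ∈ Set.Icc (h ^ n * f y) (h ^ n * f (y + n * h))

lemma fwdDiffSandwich_zero (f : ℝ → ℝ) (h : ℝ) : FwdDiffSandwich f h 0 f := fun y => by simp

lemma FwdDiffSandwich.succ {f F G : ℝ → ℝ} {h : ℝ} {n : ℕ} (hf : Monotone f) (hh : 0 ≤ h)
    (hG : FwdDiffSandwich f h n G) (hFG : IsIndefiniteIntegral F G) :
    FwdDiffSandwich f h (n + 1) F := by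
  intro y
  have hhn : 0 ≤ h ^ n := pow_nonneg hh n
  have hbounds : ∀ t ∈ Set.Icc y (y + h),
      (Δ_[h])^[n] G t ∈ Set.Icc (h ^ n * f y) (h ^ n * f (y + (n + 1 : ℕ) * h)) :=
    fun t ht => ⟨(mul_le_mul_of_nonneg_left (hf ht.1) hhn).trans (hG t).1,
      (hG t).2.trans (mul_le_mul_of_nonneg_left (hf (by push_cast; linarith [ht.2])) hhn)⟩
  rw [Function.iterate_succ_apply', pow_succ', mul_assoc, mul_assoc]
  exact (hFG.fwdDiff_iterate h n).fwdDiff_mem_Icc hh hbounds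

lemma fwdDiff_iterate_three (F : ℝ → ℝ) (h y : ℝ) :
    (Δ_[h])^[3] F y = F (y + 3 * h) - 3 * F (y + 2 * h) + 3 * F (y + h) - F y := by
  simp only [Function.iterate_succ, Function.iterate_zero, Function.comp_apply, id, fwdDiff]
  ring_nf

lemma fwdDiff_iterate_three_sub (F : ℝ → ℝ) (h y : ℝ) :
    (Δ_[h])^[3] F (y - 3 * h) = F y - 3 * F (y - h) + 3 * F (y - 2 * h) - F (y - 3 * h) := by
  simp only [Function.iterate_succ, Function.iterate_zero, Function.comp_apply, id, fwdDiff]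
  ring_nf

theorem third_difference_sandwich_general
    (ψ₀ ψ₁ ψ₂ ψ₃ : ℝ → ℝ) (hmono : Monotone ψ₀)
    (hψ₁ : ∀ x, ψ₁ x = ∫ u in (0:ℝ)..x, ψ₀ u)
    (hψ₂ : ∀ x, ψ₂ x = ∫ v in (0:ℝ)..x, ψ₁ v)
    (hψ₃ : ∀ x, ψ₃ x = ∫ t in (0:ℝ)..x, ψ₂ t)
    (x h : ℝ) (hh : 0 < h) :
    h ^ (-(3:ℤ)) * (ψ₃ x - 3 * ψ₃ (x - h) + 3 * ψ₃ (x - 2*h) - ψ₃ (x - 3*h)) ≤ ψ₀ x ∧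
    ψ₀ x ≤ h ^ (-(3:ℤ)) * (ψ₃ (x + 3*h) - 3 * ψ₃ (x + 2*h) + 3 * ψ₃ (x + h) - ψ₃ x) := by
  have h₁ : IsIndefiniteIntegral ψ₁ ψ₀ :=
    .of_eq_integral_zero (fun _ _ => hmono.intervalIntegrable) hψ₁
  have h₂ : IsIndefiniteIntegral ψ₂ ψ₁ :=
    .of_eq_integral_zero h₁.continuous.intervalIntegrable hψ₂
  have h₃ : IsIndefiniteIntegral ψ₃ ψ₂ :=
    .of_eq_integral_zero h₂.continuous.intervalIntegrable hψ₃
  have hS : FwdDiffSandwich ψ₀ h 3 ψ₃ :=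
    (((fwdDiffSandwich_zero ψ₀ h).succ hmono hh.le h₁).succ hmono hh.le h₂).succ hmono hh.le h₃
  have hlower := (hS (x - 3 * h)).2
  have hupper := (hS x).1
  rw [fwdDiff_iterate_three_sub, Nat.cast_ofNat, sub_add_cancel] at hlower
  rw [fwdDiff_iterate_three] at hupper
  rw [zpow_neg, zpow_ofNat]
  constructor
  · rw [inv_mul_le_iff₀ (by positivity)]
    exact hlower
  · rw [le_inv_mul_iff₀ (by positivity)]
    exact hupper

theorem third_difference_sandwich
    (ψ₀ ψ₁ ψ₂ ψ₃ : ℝ → ℝ) (hmono : Monotone ψ₀)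
    (hloc : LocallyIntegrable ψ₀) (hzero : ∀ x ≤ (0:ℝ), ψ₀ x = 0)
    (hψ₁ : ∀ x, ψ₁ x = ∫ u in (0:ℝ)..x, ψ₀ u)
    (hψ₂ : ∀ x, ψ₂ x = ∫ v in (0:ℝ)..x, ψ₁ v)
    (hψ₃ : ∀ x, ψ₃ x = ∫ t in (0:ℝ)..x, ψ₂ t)
    (x h : ℝ) (hh : 0 < h) :
    h ^ (-(3:ℤ)) * (ψ₃ x - 3 * ψ₃ (x - h) + 3 * ψ₃ (x - 2*h) - ψ₃ (x - 3*h)) ≤ ψ₀ x ∧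
    ψ₀ x ≤ h ^ (-(3:ℤ)) * (ψ₃ (x + 3*h) - 3 * ψ₃ (x + 2*h) + 3 * ψ₃ (x + h) - ψ₃ x) :=
  third_difference_sandwich_general ψ₀ ψ₁ ψ₂ ψ₃ hmono hψ₁ hψ₂ hψ₃ x h hh
end
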